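/- arXiv:math/0603201 — 4 statements merged into one kernel-verified Lean document; each statement's English description precedes it below -/
import Mathlib

section
/- A list of positive real numbers b_1, ..., b_d is not lopsided (i.e. no b_i exceeds the sum of the others) if and only if there exist complex numbers φ_1, ..., φ_d, each of absolute value 1, such that φ_1 b_1 + ... + φ_d b_d = 0. -/
/-!
If no `bᵢ` exceeds half of `S = ∑ bⱼ`, order the indices and cut the list at a weighted median
`k`: the three blocks `j < k`, `{k}`, `j > k` all weigh at most `S / 2`, so their weights
`x, y, z` satisfy the triangle inequalities. Three such lengths close up into a triangle in `ℂ`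
(by the intermediate value theorem, `θ ↦ ‖y + z e^{iθ}‖` sweeps `[|y - z|, y + z]`), and giving
every index of a block that block's side direction makes `∑ φᵢ bᵢ` vanish. Conversely, if
`∑ φⱼ bⱼ = 0` then `bᵢ = ‖∑_{j ≠ i} φⱼ bⱼ‖ ≤ ∑_{j ≠ i} bⱼ` by the triangle inequality.
-/

open Complex Finset

lemma le_sum_erase_iff_two_mul_le_sum {ι : Type*} [DecidableEq ι] {s : Finset ι} {i : ι}
    (hi : i ∈ s) (b : ι → ℝ) : b i ≤ ∑ j ∈ s.erase i, b j ↔ 2 * b i ≤ ∑ j ∈ s, b j := by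
  rw [← add_sum_erase s b hi]
  constructor <;> intro h <;> linarith

lemma le_sum_erase_of_sum_mul_eq_zero {ι : Type*} [DecidableEq ι] {s : Finset ι} {b : ι → ℝ}
    {φ : ι → ℂ} (hb : ∀ j ∈ s, 0 ≤ b j) (hφ : ∀ j ∈ s, ‖φ j‖ = 1)
    (hsum : ∑ j ∈ s, φ j * b j = 0) {i : ι} (hi : i ∈ s) :
    b i ≤ ∑ j ∈ s.erase i, b j := by
  have hnorm : ∀ j ∈ s, ‖φ j * b j‖ = |b j| := fun j hj => by
    rw [norm_mul, hφ j hj, one_mul, norm_real, Real.norm_eq_abs]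
  have hi_eq : φ i * b i = -∑ j ∈ s.erase i, φ j * b j :=
    eq_neg_of_add_eq_zero_left (by rwa [add_sum_erase s (fun j => φ j * b j) hi])
  calc b i ≤ ‖φ i * b i‖ := (hnorm i hi).symm ▸ le_abs_self (b i)
    _ = ‖∑ j ∈ s.erase i, φ j * b j‖ := by rw [hi_eq, norm_neg]
    _ ≤ ∑ j ∈ s.erase i, ‖φ j * b j‖ := norm_sum_le _ _
    _ = ∑ j ∈ s.erase i, b j := sum_congr rfl fun j hj => by
      rw [hnorm j (mem_of_mem_erase hj), abs_of_nonneg (hb j (mem_of_mem_erase hj))]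

lemma exists_norm_eq_one_and_norm_add_mul_eq {x y z : ℝ} (h₁ : |y - z| ≤ x) (h₂ : x ≤ |y + z|) :
    ∃ w : ℂ, ‖w‖ = 1 ∧ ‖(y : ℂ) + z * w‖ = x := by
  let f : ℝ → ℝ := fun θ => ‖(y : ℂ) + z * exp (θ * I)‖
  have hf : Continuous f := by fun_prop
  have hf0 : f 0 = |y + z| := by simp [f, ← ofReal_add, norm_real]
  have hfπ : f Real.pi = |y - z| := by
    simp [f, exp_pi_mul_I, ← sub_eq_add_neg, ← ofReal_sub, norm_real]
  obtain ⟨θ, -, hθ⟩ :=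
    intermediate_value_Icc' Real.pi_pos.le hf.continuousOn ⟨hfπ ▸ h₁, hf0 ▸ h₂⟩
  exact ⟨exp (θ * I), norm_exp_ofReal_mul_I θ, hθ⟩

lemma exists_norm_eq_one_and_mul_add_mul_add_mul_eq_zero {x y z : ℝ}
    (hx : x ≤ y + z) (hy : y ≤ x + z) (hz : z ≤ x + y) :
    ∃ u v w : ℂ, ‖u‖ = 1 ∧ ‖v‖ = 1 ∧ ‖w‖ = 1 ∧ u * x + v * y + w * z = 0 := by
  obtain ⟨w, hw, hnorm⟩ := exists_norm_eq_one_and_norm_add_mul_eq (x := x) (y := y) (z := z)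
    (abs_sub_le_iff.2 ⟨by linarith, by linarith⟩) (hx.trans (le_abs_self _))
  have hpolar := norm_mul_exp_arg_mul_I (-((y : ℂ) + z * w))
  rw [norm_neg, hnorm] at hpolar
  exact ⟨exp (arg (-((y : ℂ) + z * w)) * I), 1, w, norm_exp_ofReal_mul_I _, norm_one, hw,
    by linear_combination hpolar⟩

lemma sum_eq_sum_lt_add_add_sum_gt {ι M : Type*} [Fintype ι] [LinearOrder ι] [AddCommMonoid M]
    (f : ι → M) (k : ι) : ∑ i, f i = ∑ i with i < k, f i + f k + ∑ i with k < i, f i := by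
  rw [← add_sum_erase _ f (mem_univ k), ← sum_filter_add_sum_filter_not (univ.erase k) (· < k),
    add_comm (f k), add_assoc, add_assoc]
  congr 1
  · exact sum_congr (by ext j; simpa using fun h => h.ne) fun _ _ => rfl
  · rw [add_comm]
    congr 1
    exact sum_congr (by ext j; simp only [mem_filter, mem_erase, mem_univ, and_true, not_lt]; grind)
      fun _ _ => rfl

lemma exists_weighted_median {ι : Type*} [Fintype ι] [LinearOrder ι] [Nonempty ι] {b : ι → ℝ}
    (hb : ∀ i, 0 ≤ b i) :
    ∃ k, 2 * ∑ j with j < k, b j ≤ ∑ j, b j ∧ 2 * ∑ j with k < j, b j ≤ ∑ j, b j := by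
  set S := ∑ j, b j
  have hS : 0 ≤ S := sum_nonneg fun j _ => hb j
  let A := univ.filter fun k => 2 * ∑ j with j < k, b j ≤ S
  have hA : A.Nonempty := by
    obtain ⟨k₀, hk₀⟩ : ∃ k₀ : ι, ∀ j, k₀ ≤ j :=
      ⟨univ.min' univ_nonempty, fun j => min'_le _ _ (mem_univ j)⟩
    refine ⟨k₀, mem_filter.2 ⟨mem_univ _, ?_⟩⟩
    rw [sum_eq_zero fun j hj => absurd (mem_filter.1 hj).2 (not_lt.2 (hk₀ j))]
    linarith
  refine ⟨A.max' hA, (mem_filter.1 (A.max'_mem hA)).2, ?_⟩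
  -- Otherwise the successor `m` of the last admissible index is not admissible, and the disjoint
  -- blocks `j < m` and `j > max' A` would each weigh more than half of `S`.
  by_contra! hlt
  have hne : (univ.filter fun j => A.max' hA < j).Nonempty :=
    nonempty_of_sum_ne_zero (f := b) (ne_of_gt (by linarith))
  set m := min' _ hne
  have hm : A.max' hA < m := (mem_filter.1 (min'_mem _ hne)).2
  have hmA : S < 2 * ∑ j with j < m, b j := by
    by_contra! h
    exact (not_le.2 hm) (le_max' A m (mem_filter.2 ⟨mem_univ _, h⟩))
  have hdisj : Disjoint (univ.filter fun j => j < m) (univ.filter fun j => A.max' hA < j) :=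
    disjoint_filter.2 fun j _ hjm hkj =>
      not_lt.2 (min'_le _ j (mem_filter.2 ⟨mem_univ _, hkj⟩)) hjm
  linarith [(sum_union hdisj (f := b)).symm.trans_le (sum_le_univ_sum_of_nonneg hb)]

theorem exists_norm_eq_one_and_sum_mul_eq_zero {ι : Type*} [Fintype ι] {b : ι → ℝ}
    (hb : ∀ i, 0 ≤ b i) (h : ∀ i, 2 * b i ≤ ∑ j, b j) :
    ∃ φ : ι → ℂ, (∀ i, ‖φ i‖ = 1) ∧ ∑ i, φ i * b i = 0 := by
  cases isEmpty_or_nonempty ι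
  · exact ⟨fun _ => 1, by simp, by simp⟩
  let _ : LinearOrder ι := LinearOrder.lift' _ (Fintype.equivFin ι).injective
  obtain ⟨k, hlo, hhi⟩ := exists_weighted_median hb
  have hsplit := sum_eq_sum_lt_add_add_sum_gt b k
  obtain ⟨u, v, w, hu, hv, hw, huvw⟩ := exists_norm_eq_one_and_mul_add_mul_add_mul_eq_zero
    (x := ∑ j with j < k, b j) (y := b k) (z := ∑ j with k < j, b j)
    (by linarith) (by linarith [h k]) (by linarith)
  refine ⟨fun i => if i < k then u else if i = k then v else w, fun i => ?_, ?_⟩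
  · dsimp only
    split_ifs <;> assumption
  · beta_reduce
    rw [sum_eq_sum_lt_add_add_sum_gt _ k, if_neg (lt_irrefl k), if_pos rfl, ← huvw]
    push_cast
    rw [mul_sum, mul_sum]
    refine congr_arg₂ (· + ·) (congr_arg₂ (· + ·) ?_ rfl) ?_
    · exact sum_congr rfl fun j hj => by rw [if_pos (mem_filter.1 hj).2]
    · refine sum_congr rfl fun j hj => ?_
      have hkj := (mem_filter.1 hj).2
      rw [if_neg hkj.not_gt, if_neg hkj.ne']

/-- A list of positive reals is not lopsided iff there exist unit-modulus complex
phases making the weighted sum vanish. -/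
theorem stmt0 (d : ℕ) (b : Fin d → ℝ) (hb : ∀ i, 0 < b i) :
    (¬ ∃ i, b i > ∑ j ∈ Finset.univ.erase i, b j) ↔
    ∃ φ : Fin d → ℂ, (∀ i, ‖φ i‖ = 1) ∧ ∑ i, φ i * (b i : ℂ) = 0 := by
  have hb₀ : ∀ i, 0 ≤ b i := fun i => (hb i).le
  push Not
  constructor
  · intro h
    exact exists_norm_eq_one_and_sum_mul_eq_zero hb₀ fun i =>
      (le_sum_erase_iff_two_mul_le_sum (mem_univ i) b).1 (h i)
  · rintro ⟨φ, hφ, hsum⟩ i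
    exact le_sum_erase_of_sum_mul_eq_zero (fun j _ => hb₀ j) (fun j _ => hφ j) hsum (mem_univ i)
end

section
/- Let f(z_1, z_2) = 1 + z_1 z_2 + z_2^2. A point (a_1, a_2) ∈ ℝ² lies in the amoeba of f (the image of the zero set of f in (ℂ*)² under (z_1,z_2) ↦ (log|z_1|, log|z_2|)) if and only if the list {1, e^{a_1+a_2}, e^{2a_2}} is not lopsided. -/
/-!
Writing `u = z₁ z₂` and `v = z₂²`, a zero of `f` is a relation `1 + u + v = 0` with
`‖u‖ = e^{a₁+a₂}` and `‖v‖ = e^{2a₂}`, so the three norms satisfy the triangle inequalities,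
i.e. are not lopsided. Conversely, non-lopsided lengths `1, r, s` are the side lengths of a
triangle with one side `1`, which gives `v` with `‖v‖ = s` and `‖1 + v‖ = r`; then `z₂ = √v` and
`z₁ = -(1 + v) / z₂`.
-/

open Real

theorem Complex.exists_norm_eq_norm_one_add_eq_iff (r s : ℝ) :
    (∃ w : ℂ, ‖w‖ = s ∧ ‖1 + w‖ = r) ↔ 1 ≤ r + s ∧ r ≤ 1 + s ∧ s ≤ 1 + r := by
  constructor
  · rintro ⟨w, rfl, rfl⟩
    have h₁ := norm_sub_le (1 + w) w
    have h₃ := norm_sub_le (1 + w) 1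
    rw [add_sub_cancel_right, norm_one] at h₁
    rw [add_sub_cancel_left, norm_one] at h₃
    exact ⟨h₁, (norm_add_le 1 w).trans_eq (by rw [norm_one]), h₃.trans_eq (add_comm _ _)⟩
  · rintro ⟨h₁, h₂, h₃⟩
    have hr : 0 ≤ r := by linarith
    have hs : 0 ≤ s := by linarith
    -- `Re w = (r² - 1 - s²) / 2` is forced by `‖1 + w‖² - ‖w‖² = 1 + 2 Re w`, and the triangle
    -- inequalities make it at most `s` in absolute value.
    have hx : ((r ^ 2 - 1 - s ^ 2) / 2) ^ 2 ≤ s ^ 2 := by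
      apply sq_le_sq'
      · nlinarith [mul_nonneg (sub_nonneg.2 h₁) (sub_nonneg.2 h₃)]
      · nlinarith [mul_nonneg (sub_nonneg.2 h₂) (add_nonneg hr hs)]
    set x := (r ^ 2 - 1 - s ^ 2) / 2
    refine ⟨⟨x, √(s ^ 2 - x ^ 2)⟩, ?_, ?_⟩
    · rw [← sq_eq_sq₀ (norm_nonneg _) hs, Complex.sq_norm, Complex.normSq_mk, ← sq, ← sq,
        sq_sqrt (sub_nonneg.2 hx)]
      ring
    · rw [← sq_eq_sq₀ (norm_nonneg _) hr, Complex.sq_norm]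
      simp only [Complex.normSq_apply, Complex.add_re, Complex.one_re, Complex.add_im,
        Complex.one_im, zero_add, ← sq, sq_sqrt (sub_nonneg.2 hx)]
      ring

theorem Real.log_eq_iff_eq_exp {x a : ℝ} (hx : 0 < x) : log x = a ↔ x = exp a := by
  constructor <;> rintro rfl
  exacts [(exp_log hx).symm, log_exp a]

theorem exists_zero_with_log_norms_iff (a₁ a₂ : ℝ) :
    (∃ z₁ z₂ : ℂ, z₁ ≠ 0 ∧ z₂ ≠ 0 ∧ 1 + z₁ * z₂ + z₂ ^ 2 = 0 ∧
      log ‖z₁‖ = a₁ ∧ log ‖z₂‖ = a₂) ↔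
    ∃ w : ℂ, ‖w‖ = exp (2 * a₂) ∧ ‖1 + w‖ = exp (a₁ + a₂) := by
  have exp_two_mul : exp (2 * a₂) = exp a₂ ^ 2 := by rw [sq, ← exp_add, two_mul]
  constructor
  · rintro ⟨z₁, z₂, hz₁, hz₂, hf, ha₁, ha₂⟩
    rw [log_eq_iff_eq_exp (norm_pos_iff.2 hz₁)] at ha₁
    rw [log_eq_iff_eq_exp (norm_pos_iff.2 hz₂)] at ha₂
    refine ⟨z₂ ^ 2, by rw [norm_pow, ha₂, exp_two_mul], ?_⟩
    rw [show 1 + z₂ ^ 2 = -(z₁ * z₂) by linear_combination hf, norm_neg, norm_mul, ha₁, ha₂,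
      exp_add]
  · rintro ⟨w, hw, hw₁⟩
    obtain ⟨z₂, rfl⟩ := IsAlgClosed.exists_pow_nat_eq w two_pos
    have hz₂ : ‖z₂‖ = exp a₂ := by
      rwa [norm_pow, exp_two_mul, sq_eq_sq₀ (norm_nonneg _) (exp_pos a₂).le] at hw
    have hz₂_ne : z₂ ≠ 0 := norm_pos_iff.1 (hz₂ ▸ exp_pos a₂)
    have hw₁_ne : 1 + z₂ ^ 2 ≠ 0 := norm_pos_iff.1 (hw₁ ▸ exp_pos _)
    refine ⟨-(1 + z₂ ^ 2) / z₂, z₂, div_ne_zero (neg_ne_zero.2 hw₁_ne) hz₂_ne, hz₂_ne,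
      by field_simp; ring, ?_, by rw [hz₂, log_exp]⟩
    rw [norm_div, norm_neg, hw₁, hz₂, ← exp_sub, add_sub_cancel_right, log_exp]

/-- For f(z₁,z₂) = 1 + z₁z₂ + z₂², a point (a₁,a₂) lies in the amoeba of f iff
the list {1, e^{a₁+a₂}, e^{2a₂}} is not lopsided. -/
theorem stmt2 (a₁ a₂ : ℝ) :
    (∃ z₁ z₂ : ℂ, z₁ ≠ 0 ∧ z₂ ≠ 0 ∧ 1 + z₁ * z₂ + z₂ ^ 2 = 0 ∧
      Real.log ‖z₁‖ = a₁ ∧ Real.log ‖z₂‖ = a₂) ↔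
    ¬ (1 > Real.exp (a₁ + a₂) + Real.exp (2 * a₂) ∨
       Real.exp (a₁ + a₂) > 1 + Real.exp (2 * a₂) ∨
       Real.exp (2 * a₂) > 1 + Real.exp (a₁ + a₂)) := by
  rw [exists_zero_with_log_norms_iff, Complex.exists_norm_eq_norm_one_add_eq_iff]
  simp only [not_or, not_lt]
end

section
/- Let I be an ideal of the Laurent polynomial ring ℂ[z_1^{±1}, ..., z_r^{±1}] generated by f_1, ..., f_k, with variety V ⊂ (ℂ*)^r. For every a ∈ ℝ^r there exists f_a ∈ I such that the zero set of f_a intersected with the torus Log^{-1}(a) equals V ∩ Log^{-1}(a). Explicitly, f_a(z) = ∑_{i=1}^k f_i(z_1,...,z_r) · f̄_i(e^{2a_1} z_1^{-1}, ..., e^{2a_r} z_r^{-1}) works, where f̄_i denotes the Laurent polynomial with complex-conjugated coefficients. -/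
/-- Evaluation of a Laurent polynomial at a point of (ℂ*)^r. -/
noncomputable def lEval {r : ℕ} (z : Fin r → ℂ) (f : AddMonoidAlgebra ℂ (Fin r → ℤ)) : ℂ :=
  f.coeff.sum fun j c => c * ∏ i, z i ^ j i

/-- The Laurent polynomial f̄(e^{2a₁}z₁⁻¹, ..., e^{2a_r}z_r⁻¹), where f̄ has
complex-conjugated coefficients. -/
noncomputable def conjFlip {r : ℕ} (a : Fin r → ℝ) (f : AddMonoidAlgebra ℂ (Fin r → ℤ)) :
    AddMonoidAlgebra ℂ (Fin r → ℤ) :=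
  f.coeff.sum fun J c => AddMonoidAlgebra.single (-J) ((starRingEnd ℂ) c * ∏ i, (Real.exp (2 * a i) : ℂ) ^ J i)

/-!
On the torus `|zᵢ| = e^{aᵢ}` one has `z̄ᵢ = e^{2aᵢ} zᵢ⁻¹`, so evaluating `conjFlip a f` there
gives the complex conjugate of `f(z)`. Hence `f_a(z) = ∑ᵢ |fᵢ(z)|²`, which vanishes exactly when
every `fᵢ(z)` does; and `f_a` lies in the ideal since each summand is a multiple of some `fᵢ`.
-/

section LaurentEval

variable {K ι : Type*} [Field K] [Fintype ι]

noncomputable def laurentEval (z : ι → K) (hz : ∀ i, z i ≠ 0) :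
    AddMonoidAlgebra K (ι → ℤ) →ₐ[K] K :=
  AddMonoidAlgebra.lift K K (ι → ℤ)
    { toFun := fun j => ∏ i, z i ^ Multiplicative.toAdd j i
      map_one' := by simp
      map_mul' := fun j j' => by
        simp only [toAdd_mul, Pi.add_apply, ← Finset.prod_mul_distrib]
        exact Finset.prod_congr rfl fun i _ => zpow_add₀ (hz i) _ _ }

theorem laurentEval_single (z : ι → K) (hz : ∀ i, z i ≠ 0) (J : ι → ℤ) (c : K) :
    laurentEval z hz (AddMonoidAlgebra.single J c) = c * ∏ i, z i ^ J i := by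
  rw [laurentEval, AddMonoidAlgebra.lift_single, smul_eq_mul]
  rfl

end LaurentEval

theorem lEval_eq_laurentEval {r : ℕ} (z : Fin r → ℂ) (hz : ∀ i, z i ≠ 0)
    (f : AddMonoidAlgebra ℂ (Fin r → ℤ)) : lEval z f = laurentEval z hz f := by
  rw [laurentEval, AddMonoidAlgebra.lift_apply]
  rfl

theorem Complex.conj_eq_exp_two_mul_inv {z : ℂ} {a : ℝ} (hz : z ≠ 0) (ha : Real.log ‖z‖ = a) :
    (starRingEnd ℂ) z = (Real.exp (2 * a) : ℂ) * z⁻¹ := by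
  have h_norm : ‖z‖ = Real.exp a := by
    rw [← ha, Real.exp_log (norm_pos_iff.mpr hz)]
  have h_mul_conj : z * (starRingEnd ℂ) z = (Real.exp (2 * a) : ℂ) := by
    rw [Complex.mul_conj, Complex.normSq_eq_norm_sq, h_norm, two_mul, Real.exp_add]
    push_cast
    ring
  rw [← h_mul_conj]
  field_simp

section Torus

variable {r : ℕ} {z : Fin r → ℂ} {a : Fin r → ℝ}

theorem laurentEval_conjFlip (hz : ∀ i, z i ≠ 0) (ha : ∀ i, Real.log ‖z i‖ = a i)
    (f : AddMonoidAlgebra ℂ (Fin r → ℤ)) :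
    laurentEval z hz (conjFlip a f) = (starRingEnd ℂ) (laurentEval z hz f) := by
  rw [← lEval_eq_laurentEval z hz f, lEval, map_finsuppSum, conjFlip, map_finsuppSum]
  refine Finsupp.sum_congr fun J _ => ?_
  rw [laurentEval_single, map_mul, map_prod, mul_assoc, ← Finset.prod_mul_distrib]
  congr 1
  refine Finset.prod_congr rfl fun i _ => ?_
  rw [map_zpow₀, Complex.conj_eq_exp_two_mul_inv (hz i) (ha i), mul_zpow, Pi.neg_apply,
    zpow_neg, inv_zpow]

theorem laurentEval_mul_conjFlip (hz : ∀ i, z i ≠ 0) (ha : ∀ i, Real.log ‖z i‖ = a i)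
    (f : AddMonoidAlgebra ℂ (Fin r → ℤ)) :
    laurentEval z hz (f * conjFlip a f) = (Complex.normSq (laurentEval z hz f) : ℂ) := by
  rw [map_mul, laurentEval_conjFlip hz ha, Complex.mul_conj]

end Torus

/-- The explicit element f_a = ∑ᵢ fᵢ · f̄ᵢ(e^{2a}z⁻¹) of the ideal generated by the fᵢ
vanishes on the torus Log⁻¹(a) exactly where all the fᵢ do. -/
theorem stmt6 (r k : ℕ) (f : Fin k → AddMonoidAlgebra ℂ (Fin r → ℤ)) (a : Fin r → ℝ) :
    (∑ i, f i * conjFlip a (f i)) ∈ Ideal.span (Set.range f) ∧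
    ∀ z : Fin r → ℂ, (∀ i, z i ≠ 0) → (∀ i, Real.log ‖z i‖ = a i) →
      (lEval z (∑ i, f i * conjFlip a (f i)) = 0 ↔ ∀ i, lEval z (f i) = 0) := by
  refine ⟨Ideal.sum_mem _ fun i _ => Ideal.mul_mem_right _ _ (Ideal.subset_span ⟨i, rfl⟩), ?_⟩
  intro z hz ha
  simp only [lEval_eq_laurentEval z hz, map_sum, laurentEval_mul_conjFlip hz ha,
    ← Complex.ofReal_sum, Complex.ofReal_eq_zero]
  rw [Finset.sum_eq_zero_iff_of_nonneg fun i _ => Complex.normSq_nonneg _]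
  simp only [Finset.mem_univ, true_implies, Complex.normSq_eq_zero]
end

section
/- Let I ⊂ ℂ[z_1^{±1}, ..., z_r^{±1}] be a finitely generated ideal with variety V ⊂ (ℂ*)^r. Then the amoeba of V equals the intersection over all f ∈ I of the amoebas of the hypersurfaces Z_f: Log(V) = ⋂_{f ∈ I} Log(Z_f). -/
/-!
Evaluation at a point `z` of the torus is a ring homomorphism, so the variety of `f` lies in
every `Z_g` with `g ∈ I`. Conversely, fix `a` and let `f̄ᵃ` be the Laurent polynomial
`f̄(e^{2a} z⁻¹)`. On the fibre `Log⁻¹(a)` we have `z̄ᵢ = e^{2aᵢ} zᵢ⁻¹`, so `f̄ᵃ(z) = conj (f z)`,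
and the single element `∑ᵢ fᵢ f̄ᵢᵃ ∈ I` evaluates there to `∑ᵢ |fᵢ(z)|²`. A point of the fibre
where it vanishes is therefore a common zero of all the `fᵢ`.
-/

open ComplexConjugate

namespace LaurentEval

variable {r : ℕ}

noncomputable def monomialHom (z : Fin r → ℂ) (hz : ∀ i, z i ≠ 0) :
    Multiplicative (Fin r → ℤ) →* ℂ where
  toFun j := ∏ i, z i ^ Multiplicative.toAdd j i
  map_one' := by simp
  map_mul' j j' := by
    simp only [toAdd_mul, Pi.add_apply, zpow_add₀ (hz _), Finset.prod_mul_distrib]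

noncomputable def evalAlgHom (z : Fin r → ℂ) (hz : ∀ i, z i ≠ 0) :
    AddMonoidAlgebra ℂ (Fin r → ℤ) →ₐ[ℂ] ℂ :=
  AddMonoidAlgebra.lift ℂ ℂ (Fin r → ℤ) (monomialHom z hz)

theorem evalAlgHom_apply (z : Fin r → ℂ) (hz : ∀ i, z i ≠ 0)
    (g : AddMonoidAlgebra ℂ (Fin r → ℤ)) : evalAlgHom z hz g = lEval z g := by
  rw [evalAlgHom, AddMonoidAlgebra.lift_apply]
  exact Finsupp.sum_congr fun j _ => by simp [monomialHom]

theorem lEval_eq_zero_of_mem_span {ι : Type*} (f : ι → AddMonoidAlgebra ℂ (Fin r → ℤ))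
    (z : Fin r → ℂ) (hz : ∀ i, z i ≠ 0) (hf : ∀ i, lEval z (f i) = 0)
    {g : AddMonoidAlgebra ℂ (Fin r → ℤ)} (hg : g ∈ Ideal.span (Set.range f)) :
    lEval z g = 0 := by
  have hle : Ideal.span (Set.range f) ≤ RingHom.ker (evalAlgHom z hz) := by
    rw [Ideal.span_le]
    rintro _ ⟨i, rfl⟩
    simpa [RingHom.mem_ker, evalAlgHom_apply] using hf i
  simpa [evalAlgHom_apply] using hle hg

/-- `conjReflect w g` is the Laurent polynomial `z ↦ ḡ(w₁ z₁⁻¹, …, w_r z_r⁻¹)`. -/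
noncomputable def conjReflect (w : Fin r → ℂ) (g : AddMonoidAlgebra ℂ (Fin r → ℤ)) :
    AddMonoidAlgebra ℂ (Fin r → ℤ) :=
  g.coeff.sum fun j c => AddMonoidAlgebra.single (-j) (conj c * ∏ i, w i ^ j i)

theorem evalAlgHom_conjReflect {z w : Fin r → ℂ} (hz : ∀ i, z i ≠ 0)
    (hw : ∀ i, conj (z i) = w i * (z i)⁻¹) (g : AddMonoidAlgebra ℂ (Fin r → ℤ)) :
    evalAlgHom z hz (conjReflect w g) = conj (evalAlgHom z hz g) := by
  rw [conjReflect, map_finsuppSum, evalAlgHom_apply, lEval, map_finsuppSum]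
  refine Finsupp.sum_congr fun j _ => ?_
  simp only [evalAlgHom, AddMonoidAlgebra.lift_single, monomialHom, MonoidHom.coe_mk,
    OneHom.coe_mk, toAdd_ofAdd, Pi.neg_apply, smul_eq_mul, map_mul, map_prod, map_zpow₀, hw,
    mul_zpow, inv_zpow', Finset.prod_mul_distrib]
  ring

theorem evalAlgHom_mul_conjReflect {z w : Fin r → ℂ} (hz : ∀ i, z i ≠ 0)
    (hw : ∀ i, conj (z i) = w i * (z i)⁻¹) (g : AddMonoidAlgebra ℂ (Fin r → ℤ)) :
    evalAlgHom z hz (g * conjReflect w g) = Complex.normSq (evalAlgHom z hz g) := by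
  rw [map_mul, evalAlgHom_conjReflect hz hw, Complex.mul_conj]

theorem evalAlgHom_sum_mul_conjReflect_eq_zero_iff {ι : Type*} [Fintype ι]
    (f : ι → AddMonoidAlgebra ℂ (Fin r → ℤ)) {z w : Fin r → ℂ} (hz : ∀ i, z i ≠ 0)
    (hw : ∀ i, conj (z i) = w i * (z i)⁻¹) :
    evalAlgHom z hz (∑ i, f i * conjReflect w (f i)) = 0 ↔ ∀ i, evalAlgHom z hz (f i) = 0 := by
  simp only [map_sum, evalAlgHom_mul_conjReflect hz hw]
  norm_cast
  rw [Finset.sum_eq_zero_iff_of_nonneg fun i _ => Complex.normSq_nonneg _]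
  simp

theorem conj_eq_exp_mul_inv_of_log_norm_eq {z : ℂ} (hz : z ≠ 0) {a : ℝ}
    (ha : Real.log ‖z‖ = a) : conj z = (Real.exp (2 * a) : ℂ) * z⁻¹ := by
  have hnorm : (Real.exp (2 * a) : ℂ) = z * conj z := by
    rw [Complex.mul_conj, Complex.normSq_eq_norm_sq, ← ha, mul_comm, Real.exp_mul,
      Real.exp_log (norm_pos_iff.mpr hz)]
    norm_cast
  rw [hnorm]
  field_simp

end LaurentEval

open LaurentEval in
/-- The amoeba of the variety of a finitely generated ideal I equals the intersection of
the amoebas of the hypersurfaces Z_f over all f ∈ I. -/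
theorem stmt7 (r k : ℕ) (f : Fin k → AddMonoidAlgebra ℂ (Fin r → ℤ)) :
    {a : Fin r → ℝ | ∃ z : Fin r → ℂ, (∀ i, z i ≠ 0) ∧ (∀ i, lEval z (f i) = 0) ∧
        ∀ i, Real.log ‖z i‖ = a i} =
    ⋂ g ∈ Ideal.span (Set.range f),
      {a : Fin r → ℝ | ∃ z : Fin r → ℂ, (∀ i, z i ≠ 0) ∧ lEval z g = 0 ∧
        ∀ i, Real.log ‖z i‖ = a i} := by
  ext a
  simp only [Set.mem_ofPred_eq, Set.mem_iInter]
  constructor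
  · rintro ⟨z, hz, hf, hlog⟩ g hg
    exact ⟨z, hz, lEval_eq_zero_of_mem_span f z hz hf hg, hlog⟩
  · intro h
    let w : Fin r → ℂ := fun i => Real.exp (2 * a i)
    have hmem : ∑ i, f i * conjReflect w (f i) ∈ Ideal.span (Set.range f) :=
      Ideal.sum_mem _ fun i _ => Ideal.mul_mem_right _ _ (Ideal.subset_span ⟨i, rfl⟩)
    obtain ⟨z, hz, hzero, hlog⟩ := h _ hmem
    have hw : ∀ i, conj (z i) = w i * (z i)⁻¹ := fun i =>
      conj_eq_exp_mul_inv_of_log_norm_eq (hz i) (hlog i)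
    rw [← evalAlgHom_apply z hz, evalAlgHom_sum_mul_conjReflect_eq_zero_iff f hz hw] at hzero
    exact ⟨z, hz, fun i => evalAlgHom_apply z hz (f i) ▸ hzero i, hlog⟩
end
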